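/- arXiv:1909.10052 — 3 statements merged into one kernel-verified Lean document; each statement's English description precedes it below -/
import Mathlib

section
/- Let f be a function on Z^{2n} (pairs (k,l) of points in Z^n) such that for every λ > 0 the cardinality of {(k,l) : |f(k,l)| > λ} is at most λ^{-4}. Then Z^{2n} can be written as the union of two disjoint sets S₁ and S₂ such that for every k ∈ Z^n, ∑_{l : (k,l)∈S₁} |f(k,l)|² ≤ C, and for every l ∈ Z^n, ∑_{k : (k,l)∈S₂} |f(k,l)|² ≤ C, where C is an absolute constant. -/
/-!
If `‖f‖` is weak-ℓ⁴ with quasinorm at most one, the `j`-th largest value of `‖f‖` is at most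
`2 j^{-1/4}`, so any `N` entries carry ℓ² mass at most `8 √N`. Entries spread over `R` rows and
`Q` columns number at most `R Q ≤ ((R + Q) / 2)²`, so their mass is at most `4 (R + Q)`. Hence in
every finite set of entries some row or some column has mass at most `8`: put it into `S₁` (a
row) or `S₂` (a column), delete it and repeat. This splits every finite set, and an ultrafilter
limit of these splittings splits all of `ℤⁿ × ℤⁿ`.
-/

open scoped ENNReal NNReal Classical

open Finset

theorem eight_mul_sqrt_add_le {x m : ℝ} (hm : 0 ≤ m) (h : (m + 1) * x ^ 2 ≤ 16) :
    8 * √m + x ≤ 8 * √(m + 1) := by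
  have hs := Real.sq_sqrt hm
  have ht := Real.sq_sqrt (by linarith : 0 ≤ m + 1)
  have hs0 := Real.sqrt_nonneg m
  have ht0 : 0 < √(m + 1) := Real.sqrt_pos.2 (by linarith)
  -- `x ≤ 4 / √(m + 1) ≤ 8 (√(m + 1) - √m)`
  have hx4 : x * √(m + 1) ≤ 4 := by nlinarith [sq_nonneg (x * √(m + 1))]
  have hmean : 2 * (√m * √(m + 1)) ≤ m + (m + 1) := by nlinarith [sq_nonneg (√m - √(m + 1))]
  nlinarith

def WeakL4NormLeOne {ι E : Type*} [Norm E] (f : ι → E) : Prop :=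
  ∀ lam : ℝ, 0 < lam →
    {p | lam < ‖f p‖}.Finite ∧ (({p | lam < ‖f p‖}.ncard : ℝ) ≤ lam ^ (-4 : ℤ))

namespace WeakL4NormLeOne

variable {ι : Type*}

theorem card_mul_pow_four_le {E : Type*} [Norm E] {f : ι → E} (hf : WeakL4NormLeOne f)
    {s : Finset ι} {μ : ℝ} (hμ : 0 ≤ μ) (hs : ∀ p ∈ s, μ ≤ ‖f p‖) : #s * μ ^ 4 ≤ 16 := by
  rcases hμ.eq_or_lt with rfl | hμ
  · norm_num
  obtain ⟨hfin, hcard⟩ := hf (μ / 2) (by positivity)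
  have hsub : (s : Set ι) ⊆ {p | μ / 2 < ‖f p‖} := fun p hp => by
    simp only [Set.mem_ofPred_eq]
    linarith [hs p hp]
  have hs_card : (#s : ℝ) ≤ (μ / 2) ^ (-4 : ℤ) := by
    refine le_trans ?_ hcard
    exact_mod_cast (Set.ncard_coe_finset s).symm.trans_le (Set.ncard_le_ncard hsub hfin)
  calc (#s : ℝ) * μ ^ 4 ≤ (μ / 2) ^ (-4 : ℤ) * μ ^ 4 := by gcongr
    _ = 16 := by field_simp; norm_num

theorem sum_sq_le_sqrt_card {E : Type*} [SeminormedAddGroup E] {f : ι → E}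
    (hf : WeakL4NormLeOne f) (s : Finset ι) :
    ∑ p ∈ s, ‖f p‖ ^ 2 ≤ 8 * √(#s) := by
  induction s using Finset.induction_on_min_value (fun p => ‖f p‖) with
  | empty => simp
  | insert a s has hmin ih =>
    have hbound : ((#s : ℝ) + 1) * (‖f a‖ ^ 2) ^ 2 ≤ 16 := by
      have := hf.card_mul_pow_four_le (norm_nonneg (f a)) (s := insert a s)
        (by simpa using hmin)
      rw [card_insert_of_notMem has] at this
      push_cast at this
      linarith [pow_mul (‖f a‖) 2 2]
    rw [sum_insert has, card_insert_of_notMem has, Nat.cast_succ]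
    linarith [eight_mul_sqrt_add_le (Nat.cast_nonneg _) hbound]

end WeakL4NormLeOne

theorem two_mul_sqrt_card_le_card_image_fst_add {α β : Type*} (s : Finset (α × β)) :
    2 * √(#s) ≤ #(s.image Prod.fst) + #(s.image Prod.snd) := by
  have hcard : (#s : ℝ) ≤ #(s.image Prod.fst) * #(s.image Prod.snd) := by
    exact_mod_cast (card_le_card (subset_product (s := s))).trans (card_product _ _).le
  have := Real.sq_sqrt (Nat.cast_nonneg (α := ℝ) #s)
  nlinarith [Real.sqrt_nonneg (#s), sq_nonneg ((#(s.image Prod.fst) : ℝ) - #(s.image Prod.snd))]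

theorem WeakL4NormLeOne.sum_sq_le_card_image_fst_add {α β E : Type*} [SeminormedAddGroup E]
    {f : α × β → E} (hf : WeakL4NormLeOne f) (s : Finset (α × β)) :
    ∑ p ∈ s, ‖f p‖ ^ 2 ≤ 4 * (#(s.image Prod.fst) + #(s.image Prod.snd) : ℝ) := by
  linarith [hf.sum_sq_le_sqrt_card s, two_mul_sqrt_card_le_card_image_fst_add s]

section RowColSplit

variable {ι α β : Type*}

def IsRowColSplit (u : ι → α) (v : ι → β) (w : ι → ℝ) (C : ℝ) (s : Finset ι) (S : Set ι) :
    Prop :=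
  (∀ a, ∑ p ∈ s with u p = a ∧ p ∈ S, w p ≤ C) ∧ (∀ b, ∑ p ∈ s with v p = b ∧ p ∉ S, w p ≤ C)

variable {u : ι → α} {v : ι → β} {w : ι → ℝ} {C : ℝ}

theorem IsRowColSplit.swap {s : Finset ι} {S : Set ι} (h : IsRowColSplit u v w C s S) :
    IsRowColSplit v u w C s Sᶜ := by
  simpa only [IsRowColSplit, Set.mem_compl_iff, not_not] using h.symm

theorem IsRowColSplit.mono (hw : 0 ≤ w) {s t : Finset ι} {S : Set ι} (hst : s ⊆ t)
    (h : IsRowColSplit u v w C t S) : IsRowColSplit u v w C s S :=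
  ⟨fun a => (sum_le_sum_of_subset_of_nonneg (filter_subset_filter _ hst) fun p _ _ => hw p).trans
      (h.1 a),
    fun b => (sum_le_sum_of_subset_of_nonneg (filter_subset_filter _ hst) fun p _ _ => hw p).trans
      (h.2 b)⟩

theorem IsRowColSplit.congr {s : Finset ι} {S T : Set ι} (hST : ∀ p ∈ s, p ∈ S ↔ p ∈ T)
    (h : IsRowColSplit u v w C s S) : IsRowColSplit u v w C s T := by
  refine ⟨fun a => ?_, fun b => ?_⟩
  · rw [← filter_congr fun p hp => and_congr_right_iff.2 fun _ => hST p hp]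
    exact h.1 a
  · rw [← filter_congr fun p hp => and_congr_right_iff.2 fun _ => not_congr (hST p hp)]
    exact h.2 b

theorem IsRowColSplit.union_row (hw : 0 ≤ w) {s : Finset ι} {S : Set ι} {a : α}
    (hrow : ∑ p ∈ s with u p = a, w p ≤ C) (h : IsRowColSplit u v w C {p ∈ s | u p ≠ a} S) :
    IsRowColSplit u v w C s (S ∪ {p | u p = a}) := by
  refine ⟨fun a' => ?_, fun b => ?_⟩
  · by_cases ha : a' = a
    · subst ha
      exact (sum_le_sum_of_subset_of_nonneg (fun p hp => by
        simp only [mem_filter] at hp ⊢; exact ⟨hp.1, hp.2.1⟩) fun p _ _ => hw p).trans hrow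
    · convert h.1 a' using 2
      ext p
      simp only [mem_filter, Set.mem_union, Set.mem_ofPred_eq]
      grind
  · convert h.2 b using 2
    ext p
    simp only [mem_filter, Set.mem_union, Set.mem_ofPred_eq]
    tauto

theorem card_image_mul_lt_sum_of_lt_sum_fiber {s : Finset ι} (hs : s.Nonempty) {c : ℝ}
    (h : ∀ p ∈ s, c < ∑ q ∈ s with u q = u p, w q) : #(s.image u) * c < ∑ p ∈ s, w p := by
  rw [← sum_fiberwise_of_maps_to fun p hp => mem_image_of_mem u hp, ← nsmul_eq_mul, ← sum_const]
  refine sum_lt_sum_of_nonempty (hs.image u) fun a ha => ?_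
  obtain ⟨p, hp, rfl⟩ := mem_image.1 ha
  exact h p hp

theorem exists_light_row_or_col {s : Finset ι} (hs : s.Nonempty) {c : ℝ}
    (hc : ∑ p ∈ s, w p ≤ c * (#(s.image u) + #(s.image v))) :
    ∃ p ∈ s, ∑ q ∈ s with u q = u p, w q ≤ 2 * c ∨ ∑ q ∈ s with v q = v p, w q ≤ 2 * c := by
  by_contra! h
  have hu := card_image_mul_lt_sum_of_lt_sum_fiber hs fun p hp => (h p hp).1
  have hv := card_image_mul_lt_sum_of_lt_sum_fiber hs fun p hp => (h p hp).2
  linarith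

theorem exists_isRowColSplit (hw : 0 ≤ w) {c : ℝ} (hc0 : 0 ≤ c)
    (hc : ∀ s : Finset ι, ∑ p ∈ s, w p ≤ c * (#(s.image u) + #(s.image v))) (s : Finset ι) :
    ∃ S, IsRowColSplit u v w (2 * c) s S := by
  induction s using Finset.strongInduction with
  | H s ih =>
  rcases s.eq_empty_or_nonempty with rfl | hs
  · exact ⟨∅, fun _ => by simpa using hc0, fun _ => by simpa using hc0⟩
  obtain ⟨p, hp, hrow | hcol⟩ := exists_light_row_or_col hs (hc s)
  · obtain ⟨S, hS⟩ := ih {q ∈ s | u q ≠ u p} (filter_ssubset.2 ⟨p, hp, by simp⟩)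
    exact ⟨_, hS.union_row hw hrow⟩
  · obtain ⟨S, hS⟩ := ih {q ∈ s | v q ≠ v p} (filter_ssubset.2 ⟨p, hp, by simp⟩)
    exact ⟨_, (hS.swap.union_row hw hcol).swap⟩

end RowColSplit

/-- Compactness: choose `S` to contain `p` iff `p ∈ S_s` for ultrafilter-many finite sets `s`. -/
theorem exists_forall_finset_of_finitely_determined {ι : Type*} (P : Finset ι → Set ι → Prop)
    (hanti : ∀ ⦃s t S⦄, s ⊆ t → P t S → P s S)
    (hcongr : ∀ ⦃s S T⦄, (∀ p ∈ s, p ∈ S ↔ p ∈ T) → P s S → P s T)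
    (h : ∀ s, ∃ S, P s S) : ∃ S, ∀ s, P s S := by
  choose S hS using h
  let U : Ultrafilter (Finset ι) := .of Filter.atTop
  refine ⟨{p | ∀ᶠ t in U, p ∈ S t}, fun s => ?_⟩
  have hagree : ∀ p ∈ s, ∀ᶠ t in U, (p ∈ S t ↔ ∀ᶠ t' in U, p ∈ S t') := by
    intro p _
    by_cases hp : ∀ᶠ t in U, p ∈ S t
    · exact hp.mono fun t ht => iff_of_true ht hp
    · exact (Ultrafilter.eventually_not.2 hp).mono fun t ht => iff_of_false ht hp
  have hlarge : ∀ᶠ t in U, s ⊆ t := Ultrafilter.of_le _ (Filter.eventually_ge_atTop s)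
  obtain ⟨t, hst, ht⟩ := (hlarge.and ((Filter.eventually_all_finset s).2 hagree)).exists
  exact hcongr ht (hanti hst (hS t))

theorem tsum_ite_nnnorm_sq_le {γ E : Type*} [SeminormedAddGroup E] {P : γ → Prop} {g : γ → E}
    {C : ℝ≥0} (h : ∀ s : Finset γ, ∑ x ∈ s with P x, ‖g x‖ ^ 2 ≤ C) :
    ∑' x, (if P x then (‖g x‖₊ ^ 2 : ℝ≥0∞) else 0) ≤ C := by
  refine ENNReal.summable.tsum_le_of_sum_le fun s => ?_
  rw [← sum_filter]
  norm_cast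
  rw [← NNReal.coe_le_coe]
  push_cast
  exact h s

/-- weak-ℓ⁴ decomposition lemma on `ℤⁿ × ℤⁿ`. -/
theorem stmt_0 :
    ∃ C : ℝ≥0, ∀ (n : ℕ) (f : (Fin n → ℤ) × (Fin n → ℤ) → ℂ),
      (∀ lam : ℝ, 0 < lam →
        {p : (Fin n → ℤ) × (Fin n → ℤ) | lam < ‖f p‖}.Finite ∧
        (({p : (Fin n → ℤ) × (Fin n → ℤ) | lam < ‖f p‖}.ncard : ℝ) ≤ lam ^ (-4 : ℤ))) →
      ∃ S₁ S₂ : Set ((Fin n → ℤ) × (Fin n → ℤ)),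
        Disjoint S₁ S₂ ∧ S₁ ∪ S₂ = Set.univ ∧
        (∀ k : Fin n → ℤ,
          ∑' l : Fin n → ℤ, (if (k, l) ∈ S₁ then (‖f (k, l)‖₊ ^ 2 : ℝ≥0∞) else 0) ≤ C) ∧
        (∀ l : Fin n → ℤ,
          ∑' k : Fin n → ℤ, (if (k, l) ∈ S₂ then (‖f (k, l)‖₊ ^ 2 : ℝ≥0∞) else 0) ≤ C) := by
  refine ⟨8, fun n f hf => ?_⟩
  have hsplit : ∀ s, ∃ S, IsRowColSplit Prod.fst Prod.snd (fun p => ‖f p‖ ^ 2) 8 s S := by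
    simpa [show (2 : ℝ) * 4 = 8 by norm_num] using exists_isRowColSplit (fun _ => sq_nonneg _)
      (by norm_num) (WeakL4NormLeOne.sum_sq_le_card_image_fst_add hf)
  obtain ⟨S, hS⟩ := exists_forall_finset_of_finitely_determined _
    (fun _ _ _ hst h => h.mono (fun _ => sq_nonneg _) hst) (fun _ _ _ hST h => h.congr hST) hsplit
  refine ⟨S, Sᶜ, disjoint_compl_right, Set.union_compl_self S, fun k => ?_, fun l => ?_⟩
  · refine tsum_ite_nnnorm_sq_le fun s => ?_
    simpa [sum_filter, sum_product] using (hS ({k} ×ˢ s)).1 k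
  · refine tsum_ite_nnnorm_sq_le fun s => ?_
    simpa [sum_filter, sum_product_right] using (hS (s ×ˢ {l})).2 l
end

section
/- Suppose f : Z² → ℂ satisfies the monotonicity condition |f(k₁,l₁)| ≤ |f(k₂,l₂)| whenever max{|k₁|,|l₁|} > max{|k₂|,|l₂|}. Suppose Z² = S₁ ∪ S₂ with S₁, S₂ disjoint, and there is a constant C with ∑_{l : (k,l)∈S₁} |f(k,l)|² ≤ C for every k ∈ Z and ∑_{k : (k,l)∈S₂} |f(k,l)|² ≤ C for every l ∈ Z. Then f ∈ ℓ^{4,∞}(Z²), i.e., sup_{λ>0} λ · card{(k,l) : |f(k,l)| > λ}^{1/4} < ∞. -/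
/-!
If the square `[-n, n]²` lies in the superlevel set `{‖f‖ > λ}`, summing `‖f‖²` over it along
rows on `S₁` and along columns on `S₂` gives `λ² (2n+1)² ≤ 2 (2n+1) C`. Monotonicity in the
maximum norm forces the whole square `[-n, n]²` into the superlevel set as soon as the latter has
a point outside it, so `{‖f‖ > λ} ⊆ [-N, N]²` with `N = ⌈C / λ²⌉`, and hence
`λ⁴ · #{‖f‖ > λ} ≲ C²`.
-/

open scoped ENNReal NNReal Classical

open Finset

section RowColumn

variable {α β : Type*} {g : α × β → ℝ≥0∞} {S₁ S₂ : Set (α × β)} {C : ℝ≥0∞}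

theorem sum_product_le_card_add_card_mul (hunion : S₁ ∪ S₂ = Set.univ)
    (h₁ : ∀ a, ∑' b, (if (a, b) ∈ S₁ then g (a, b) else 0) ≤ C)
    (h₂ : ∀ b, ∑' a, (if (a, b) ∈ S₂ then g (a, b) else 0) ≤ C) (s : Finset α) (t : Finset β) :
    ∑ p ∈ s ×ˢ t, g p ≤ (#s + #t) * C := by
  have hsplit : ∀ p, g p ≤ (if p ∈ S₁ then g p else 0) + (if p ∈ S₂ then g p else 0) := by
    intro p
    rcases (Set.mem_union ..).1 (hunion ▸ Set.mem_univ p) with h | h <;> simp [h]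
  calc ∑ p ∈ s ×ˢ t, g p
      ≤ ∑ p ∈ s ×ˢ t, ((if p ∈ S₁ then g p else 0) + (if p ∈ S₂ then g p else 0)) :=
        sum_le_sum fun p _ => hsplit p
    _ = ∑ a ∈ s, ∑ b ∈ t, (if (a, b) ∈ S₁ then g (a, b) else 0) +
          ∑ b ∈ t, ∑ a ∈ s, (if (a, b) ∈ S₂ then g (a, b) else 0) := by
        rw [sum_add_distrib, sum_product, sum_product_right]
    _ ≤ ∑ _a ∈ s, C + ∑ _b ∈ t, C :=
        add_le_add (sum_le_sum fun a _ => (ENNReal.sum_le_tsum t).trans (h₁ a))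
          (sum_le_sum fun b _ => (ENNReal.sum_le_tsum s).trans (h₂ b))
    _ = (#s + #t) * C := by simp [add_mul]

theorem mul_card_mul_card_le (hunion : S₁ ∪ S₂ = Set.univ)
    (h₁ : ∀ a, ∑' b, (if (a, b) ∈ S₁ then g (a, b) else 0) ≤ C)
    (h₂ : ∀ b, ∑' a, (if (a, b) ∈ S₂ then g (a, b) else 0) ≤ C) {s : Finset α} {t : Finset β}
    {c : ℝ≥0∞} (hc : ∀ p ∈ s ×ˢ t, c ≤ g p) :
    c * (#s * #t) ≤ (#s + #t) * C :=
  calc c * (#s * #t) = ∑ _p ∈ s ×ˢ t, c := by simp [card_product, mul_comm]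
    _ ≤ ∑ p ∈ s ×ˢ t, g p := sum_le_sum hc
    _ ≤ (#s + #t) * C := sum_product_le_card_add_card_mul hunion h₁ h₂ s t

end RowColumn

theorem sq_mul_card_mul_card_le {α β E : Type*} [SeminormedAddGroup E] {f : α × β → E}
    {S₁ S₂ : Set (α × β)} (hunion : S₁ ∪ S₂ = Set.univ) {C : ℝ≥0}
    (h₁ : ∀ a, ∑' b, (if (a, b) ∈ S₁ then (‖f (a, b)‖₊ ^ 2 : ℝ≥0∞) else 0) ≤ C)
    (h₂ : ∀ b, ∑' a, (if (a, b) ∈ S₂ then (‖f (a, b)‖₊ ^ 2 : ℝ≥0∞) else 0) ≤ C)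
    {lam : ℝ} (hlam : 0 ≤ lam) {s : Finset α} {t : Finset β} (h : ∀ p ∈ s ×ˢ t, lam ≤ ‖f p‖) :
    lam ^ 2 * (#s * #t) ≤ (#s + #t) * C := by
  have key := mul_card_mul_card_le (g := fun p => (‖f p‖₊ : ℝ≥0∞) ^ 2) hunion h₁ h₂
    (c := ENNReal.ofReal (lam ^ 2)) fun p hp => by
      rw [← enorm_eq_nnnorm, ← ofReal_norm, ← ENNReal.ofReal_pow (norm_nonneg _)]
      exact ENNReal.ofReal_le_ofReal (pow_le_pow_left₀ hlam (h p hp) 2)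
  rw [← ENNReal.ofReal_le_ofReal_iff (by positivity), ENNReal.ofReal_mul (by positivity),
    ENNReal.ofReal_mul (by positivity), ENNReal.ofReal_mul (by positivity),
    ENNReal.ofReal_add (by positivity) (by positivity)]
  simpa using key

theorem mem_Icc_neg_prod_Icc_neg_iff {n : ℕ} {p : ℤ × ℤ} :
    p ∈ Icc (-(n : ℤ)) n ×ˢ Icc (-(n : ℤ)) n ↔ max |p.1| |p.2| ≤ n := by
  simp only [mem_product, mem_Icc, max_le_iff, abs_le]

theorem card_Icc_neg_natCast (n : ℕ) : #(Icc (-(n : ℤ)) n) = 2 * n + 1 := by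
  rw [Int.card_Icc]; omega

section MaxNormMonotone

variable {E : Type*} [SeminormedAddGroup E] {f : ℤ × ℤ → E} {S₁ S₂ : Set (ℤ × ℤ)} {C : ℝ≥0}
  {lam : ℝ}

theorem sq_mul_two_mul_add_one_le (hunion : S₁ ∪ S₂ = Set.univ)
    (h₁ : ∀ k, ∑' l, (if (k, l) ∈ S₁ then (‖f (k, l)‖₊ ^ 2 : ℝ≥0∞) else 0) ≤ C)
    (h₂ : ∀ l, ∑' k, (if (k, l) ∈ S₂ then (‖f (k, l)‖₊ ^ 2 : ℝ≥0∞) else 0) ≤ C)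
    (hlam : 0 ≤ lam) {n : ℕ} (h : ∀ p ∈ Icc (-(n : ℤ)) n ×ˢ Icc (-(n : ℤ)) n, lam ≤ ‖f p‖) :
    lam ^ 2 * (2 * n + 1) ≤ 2 * C := by
  have key := sq_mul_card_mul_card_le hunion h₁ h₂ hlam h
  simp only [card_Icc_neg_natCast, Nat.cast_add, Nat.cast_mul, Nat.cast_ofNat,
    Nat.cast_one] at key
  refine le_of_mul_le_mul_right ?_ (by positivity : (0 : ℝ) < 2 * n + 1)
  linarith

theorem setOf_lt_norm_subset_Icc_neg_prod
    (hmono : ∀ k₁ l₁ k₂ l₂ : ℤ, max |k₁| |l₁| > max |k₂| |l₂| → ‖f (k₁, l₁)‖ ≤ ‖f (k₂, l₂)‖)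
    (hunion : S₁ ∪ S₂ = Set.univ)
    (h₁ : ∀ k, ∑' l, (if (k, l) ∈ S₁ then (‖f (k, l)‖₊ ^ 2 : ℝ≥0∞) else 0) ≤ C)
    (h₂ : ∀ l, ∑' k, (if (k, l) ∈ S₂ then (‖f (k, l)‖₊ ^ 2 : ℝ≥0∞) else 0) ≤ C)
    (hlam : 0 ≤ lam) {n : ℕ} (hn : 2 * C < lam ^ 2 * (2 * n + 1)) :
    {p | lam < ‖f p‖} ⊆ ↑(Icc (-(n : ℤ)) n ×ˢ Icc (-(n : ℤ)) n) := by
  intro q hq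
  by_contra hqn
  rw [Finset.mem_coe, mem_Icc_neg_prod_Icc_neg_iff, not_le] at hqn
  refine hn.not_ge (sq_mul_two_mul_add_one_le hunion h₁ h₂ hlam fun p hp => ?_)
  exact hq.le.trans (hmono _ _ _ _ ((mem_Icc_neg_prod_Icc_neg_iff.1 hp).trans_lt hqn))

theorem finite_setOf_lt_norm_and_pow_four_mul_ncard_le
    (hmono : ∀ k₁ l₁ k₂ l₂ : ℤ, max |k₁| |l₁| > max |k₂| |l₂| → ‖f (k₁, l₁)‖ ≤ ‖f (k₂, l₂)‖)
    (hunion : S₁ ∪ S₂ = Set.univ)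
    (h₁ : ∀ k, ∑' l, (if (k, l) ∈ S₁ then (‖f (k, l)‖₊ ^ 2 : ℝ≥0∞) else 0) ≤ C)
    (h₂ : ∀ l, ∑' k, (if (k, l) ∈ S₂ then (‖f (k, l)‖₊ ^ 2 : ℝ≥0∞) else 0) ≤ C)
    (hlam : 0 < lam) :
    {p | lam < ‖f p‖}.Finite ∧ lam ^ 4 * {p | lam < ‖f p‖}.ncard ≤ (8 * C) ^ 2 := by
  set N := ⌈(C : ℝ) / lam ^ 2⌉₊
  have hlam2 : 0 < lam ^ 2 := by positivity
  have hN : (C : ℝ) ≤ N * lam ^ 2 := (div_le_iff₀ hlam2).1 (Nat.le_ceil _)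
  have hN' : N * lam ^ 2 < C + lam ^ 2 := by
    have := mul_lt_mul_of_pos_right
      (Nat.ceil_lt_add_one (div_nonneg C.coe_nonneg hlam2.le)) hlam2
    rwa [add_mul, div_mul_cancel₀ _ hlam2.ne', one_mul] at this
  have hsub := setOf_lt_norm_subset_Icc_neg_prod hmono hunion h₁ h₂ hlam.le (n := N)
    (by nlinarith)
  refine ⟨(Finset.finite_toSet _).subset hsub, ?_⟩
  rcases Set.eq_empty_or_nonempty {p | lam < ‖f p‖} with hE | ⟨q, hq⟩
  · rw [hE, Set.ncard_empty, Nat.cast_zero, mul_zero]; positivity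
  have hq2 : lam ^ 2 ≤ 2 * C := by
    simpa [one_add_one_eq_two] using sq_mul_card_mul_card_le hunion h₁ h₂ hlam.le
      (s := {q.1}) (t := {q.2}) (by simpa using hq.le)
  have hcard : ({p | lam < ‖f p‖}.ncard : ℝ) ≤ (2 * N + 1) ^ 2 := by
    have := Set.ncard_le_ncard hsub (Finset.finite_toSet _)
    rw [Set.ncard_coe_finset, card_product, card_Icc_neg_natCast, ← sq] at this
    exact_mod_cast this
  calc lam ^ 4 * {p | lam < ‖f p‖}.ncard ≤ lam ^ 4 * (2 * N + 1) ^ 2 := by gcongr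
    _ = (lam ^ 2 * (2 * N + 1)) ^ 2 := by ring
    _ ≤ (8 * C) ^ 2 := pow_le_pow_left₀ (by positivity) (by nlinarith) 2

end MaxNormMonotone

theorem mul_rpow_one_div_le {a x M : ℝ} {n : ℕ} (hn : n ≠ 0) (ha : 0 ≤ a) (hx : 0 ≤ x)
    (h : a ^ n * x ≤ M) : a * x ^ ((1 : ℝ) / n) ≤ M ^ ((1 : ℝ) / n) :=
  calc a * x ^ ((1 : ℝ) / n) = (a ^ n * x) ^ ((1 : ℝ) / n) := by
        rw [Real.mul_rpow (by positivity) hx, one_div, Real.pow_rpow_inv_natCast ha hn]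
    _ ≤ M ^ ((1 : ℝ) / n) := Real.rpow_le_rpow (by positivity) h (by positivity)

theorem stmt_3_general (f : ℤ × ℤ → ℂ)
    (hmono : ∀ k₁ l₁ k₂ l₂ : ℤ, max |k₁| |l₁| > max |k₂| |l₂| → ‖f (k₁, l₁)‖ ≤ ‖f (k₂, l₂)‖)
    (S₁ S₂ : Set (ℤ × ℤ)) (hunion : S₁ ∪ S₂ = Set.univ)
    (C : ℝ≥0)
    (h₁ : ∀ k : ℤ, ∑' l : ℤ, (if (k, l) ∈ S₁ then (‖f (k, l)‖₊ ^ 2 : ℝ≥0∞) else 0) ≤ C)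
    (h₂ : ∀ l : ℤ, ∑' k : ℤ, (if (k, l) ∈ S₂ then (‖f (k, l)‖₊ ^ 2 : ℝ≥0∞) else 0) ≤ C) :
    ∃ B : ℝ, ∀ lam : ℝ, 0 < lam →
      {p : ℤ × ℤ | lam < ‖f p‖}.Finite ∧
      lam * (({p : ℤ × ℤ | lam < ‖f p‖}.ncard : ℝ) ^ ((1 : ℝ) / 4)) ≤ B := by
  refine ⟨((8 * C) ^ 2 : ℝ) ^ ((1 : ℝ) / 4), fun lam hlam => ?_⟩
  obtain ⟨hfin, hbound⟩ :=
    finite_setOf_lt_norm_and_pow_four_mul_ncard_le hmono hunion h₁ h₂ hlam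
  exact ⟨hfin, by
    simpa using mul_rpow_one_div_le (n := 4) four_ne_zero hlam.le (Nat.cast_nonneg _) hbound⟩

/-- converse of the decomposition lemma for functions on `ℤ²` that are radially
decreasing with respect to the maximum norm. -/
theorem stmt_3 (f : ℤ × ℤ → ℂ)
    (hmono : ∀ k₁ l₁ k₂ l₂ : ℤ, max |k₁| |l₁| > max |k₂| |l₂| → ‖f (k₁, l₁)‖ ≤ ‖f (k₂, l₂)‖)
    (S₁ S₂ : Set (ℤ × ℤ)) (hdisj : Disjoint S₁ S₂) (hunion : S₁ ∪ S₂ = Set.univ)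
    (C : ℝ≥0)
    (h₁ : ∀ k : ℤ, ∑' l : ℤ, (if (k, l) ∈ S₁ then (‖f (k, l)‖₊ ^ 2 : ℝ≥0∞) else 0) ≤ C)
    (h₂ : ∀ l : ℤ, ∑' k : ℤ, (if (k, l) ∈ S₂ then (‖f (k, l)‖₊ ^ 2 : ℝ≥0∞) else 0) ≤ C) :
    ∃ B : ℝ, ∀ lam : ℝ, 0 < lam →
      {p : ℤ × ℤ | lam < ‖f p‖}.Finite ∧
      lam * (({p : ℤ × ℤ | lam < ‖f p‖}.ncard : ℝ) ^ ((1 : ℝ) / 4)) ≤ B :=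
  stmt_3_general f hmono S₁ S₂ hunion C h₁ h₂
end

section
/- Fix n ≥ 1, and for even N ∈ ℕ define F_N : (0,∞) → [0,∞) by F_N(λ) = 2^{2nN²−nN} if λ < 2^{−nN²/2} and F_N(λ) = 0 otherwise. Then for every α > 0 there is a constant C(α,n) such that ∑_{N even} F_N(λ) ≤ C(α,n) λ^{−4} log^{−α}(e/λ) for all λ ∈ (0,1). -/
/-!
Put `l = log (1 / λ)` and `t_N = n N² log 2 / 2`. The `N`-th term is present iff `t_N < l`,
and then it equals `exp (4 t_N) · 2 ^ (-n N)`. Splitting `1 + l ≤ (1 + t_N) (1 + (l - t_N))` and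
dominating `(1 + (l - t_N)) ^ α` by `exp (4 (l - t_N))` gives
`exp (4 t_N) (1 + l) ^ α ≲ (1 + t_N) ^ α λ ^ (-4)`. As `t_N` is only quadratic in `N`, the
surplus `2 ^ (-n N)` absorbs `(1 + t_N) ^ α` at the price of a geometric factor `2 ^ (-N / 2)`,
and summing that series gives the constant.
-/

open Real

lemma one_add_rpow_le_mul_exp {β c : ℝ} (hβ : 0 < β) (hc : 0 < c) :
    ∃ K, 0 ≤ K ∧ ∀ s, 0 ≤ s → (1 + s) ^ β ≤ K * exp (c * s) := by
  refine ⟨exp (c + β * log (β / c)), (exp_pos _).le, fun s hs => ?_⟩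
  have h1s : 0 < 1 + s := by linarith
  have hlog : log ((1 + s) * (c / β)) ≤ (1 + s) * (c / β) - 1 :=
    log_le_sub_one_of_pos (by positivity)
  rw [log_mul h1s.ne' (by positivity), log_div hc.ne' hβ.ne'] at hlog
  have hscale : β * ((1 + s) * (c / β)) = c * (1 + s) := by field_simp
  rw [rpow_def_of_pos h1s, ← exp_add, exp_le_exp, log_div hβ.ne' hc.ne']
  nlinarith [mul_le_mul_of_nonneg_left hlog hβ.le]

lemma one_add_add_rpow_le {α a b : ℝ} (hα : 0 ≤ α) (ha : 0 ≤ a) (hb : 0 ≤ b) :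
    (1 + (a + b)) ^ α ≤ (1 + a) ^ α * (1 + b) ^ α := by
  rw [← mul_rpow (by linarith) (by linarith)]
  exact rpow_le_rpow (by linarith) (by nlinarith) hα

lemma exp_mul_one_add_rpow_le {α c : ℝ} (hα : 0 < α) (hc : 0 < c) :
    ∃ K, 0 ≤ K ∧ ∀ t l, 0 ≤ t → t ≤ l →
      exp (c * t) * (1 + l) ^ α ≤ K * (1 + t) ^ α * exp (c * l) := by
  obtain ⟨K, hK, hbound⟩ := one_add_rpow_le_mul_exp hα hc
  refine ⟨K, hK, fun t l ht htl => ?_⟩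
  have hsplit : (1 + l) ^ α ≤ (1 + t) ^ α * (K * exp (c * (l - t))) := by
    calc (1 + l) ^ α = (1 + (t + (l - t))) ^ α := by ring_nf
      _ ≤ (1 + t) ^ α * (1 + (l - t)) ^ α := one_add_add_rpow_le hα.le ht (by linarith)
      _ ≤ (1 + t) ^ α * (K * exp (c * (l - t))) := by
        gcongr
        exact hbound _ (by linarith)
  calc exp (c * t) * (1 + l) ^ α ≤ exp (c * t) * ((1 + t) ^ α * (K * exp (c * (l - t)))) := by
        gcongr
    _ = K * (1 + t) ^ α * (exp (c * t) * exp (c * (l - t))) := by ring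
    _ = K * (1 + t) ^ α * exp (c * l) := by rw [← exp_add]; ring_nf

lemma one_add_rpow_mul_exp_neg_le {α : ℝ} (hα : 0 < α) {n : ℕ} (hn : 1 ≤ n) :
    ∃ K, 0 ≤ K ∧ ∀ N : ℕ,
      (1 + n * N ^ 2 / 2 * log 2) ^ α * exp (-(log 2 * (n * N))) ≤
        K * exp (-(log 2 / 2)) ^ N := by
  have hlog2 : 0 < log 2 := log_pos one_lt_two
  have hlog2_le : log 2 ≤ 1 := by linarith [log_le_sub_one_of_pos (two_pos (α := ℝ))]
  have hn1 : (1 : ℝ) ≤ n := by exact_mod_cast hn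
  obtain ⟨K, hK, hbound⟩ :=
    one_add_rpow_le_mul_exp (by positivity : 0 < 2 * α) (half_pos hlog2)
  refine ⟨n ^ α * K, by positivity, fun N => ?_⟩
  have hpoly : 1 + n * N ^ 2 / 2 * log 2 ≤ n * (1 + N) ^ 2 := by
    nlinarith [mul_le_mul_of_nonneg_left hlog2_le (by positivity : (0 : ℝ) ≤ n * N ^ 2 / 2),
      (by positivity : (0 : ℝ) ≤ n * N)]
  have hgrowth : (1 + n * N ^ 2 / 2 * log 2) ^ α ≤ n ^ α * (K * exp (log 2 / 2 * N)) :=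
    calc (1 + n * N ^ 2 / 2 * log 2) ^ α ≤ (n * (1 + N) ^ 2 : ℝ) ^ α :=
          rpow_le_rpow (by positivity) hpoly hα.le
      _ = n ^ α * (1 + N : ℝ) ^ (2 * α) := by
          rw [mul_rpow (by positivity) (by positivity), ← rpow_natCast_mul (by positivity)]
          norm_num
      _ ≤ n ^ α * (K * exp (log 2 / 2 * N)) := by gcongr; exact hbound _ (by positivity)
  have hdecay : exp (-(log 2 * (n * N))) ≤ exp (-(log 2 * N)) := by
    gcongr
    exact le_mul_of_one_le_left (by positivity) hn1
  calc (1 + n * N ^ 2 / 2 * log 2) ^ α * exp (-(log 2 * (n * N)))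
      ≤ n ^ α * (K * exp (log 2 / 2 * N)) * exp (-(log 2 * N)) := by gcongr
    _ = n ^ α * K * exp (-(log 2 / 2)) ^ N := by
        rw [← exp_nat_mul, mul_assoc, mul_assoc, ← exp_add]; ring_nf

lemma tsum_le_mul_geometric {f : ℕ → ℝ} {B r : ℝ} (hr0 : 0 ≤ r) (hr1 : r < 1)
    (hf : ∀ N, 0 ≤ f N) (hle : ∀ N, f N ≤ B * r ^ N) : ∑' N, f N ≤ B * (1 - r)⁻¹ := by
  have hgeom : Summable fun N => B * r ^ N := (summable_geometric_of_lt_one hr0 hr1).mul_left B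
  calc ∑' N, f N ≤ ∑' N, B * r ^ N := (hgeom.of_nonneg_of_le hf hle).tsum_le_tsum hle hgeom
    _ = B * (1 - r)⁻¹ := by rw [tsum_mul_left, tsum_geometric_of_lt_one hr0 hr1]

lemma two_rpow_le_mul_geometric_of_lt {α : ℝ} (hα : 0 < α) {n : ℕ} (hn : 1 ≤ n) :
    ∃ C, 0 ≤ C ∧ ∀ lam ∈ Set.Ioo (0 : ℝ) 1, ∀ N : ℕ,
      lam < (2 : ℝ) ^ (-((n : ℝ) * N ^ 2) / 2) →
      (2 : ℝ) ^ (2 * (n : ℝ) * N ^ 2 - n * N) ≤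
        C * lam ^ (-4 : ℝ) * log (exp 1 / lam) ^ (-α) * exp (-(log 2 / 2)) ^ N := by
  obtain ⟨K₁, hK₁, hweight⟩ := exp_mul_one_add_rpow_le hα four_pos
  obtain ⟨K₂, hK₂, hdecay⟩ := one_add_rpow_mul_exp_neg_le hα hn
  refine ⟨K₁ * K₂, by positivity, fun lam ⟨hlam0, hlam1⟩ N hN => ?_⟩
  set l := -log lam with hl_def
  set t := (n : ℝ) * N ^ 2 / 2 * log 2 with ht_def
  have ht : 0 ≤ t := by have := log_pos (one_lt_two (α := ℝ)); positivity
  have htl : t ≤ l := by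
    have := log_lt_log hlam0 hN
    rw [log_rpow two_pos] at this
    rw [hl_def, ht_def]
    linarith
  have hl : 0 < 1 + l := by linarith
  have hterm :
      (2 : ℝ) ^ (2 * (n : ℝ) * N ^ 2 - n * N) = exp (4 * t) * exp (-(log 2 * (n * N))) := by
    rw [rpow_def_of_pos two_pos, ← exp_add, ht_def]; ring_nf
  have hlam : lam ^ (-4 : ℝ) = exp (4 * l) := by rw [rpow_def_of_pos hlam0, hl_def]; ring_nf
  have hlog : log (exp 1 / lam) = 1 + l := by
    rw [log_div (exp_ne_zero 1) hlam0.ne', log_exp]; ring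
  rw [hterm, hlam, hlog, rpow_neg hl.le,
    show ∀ x y z : ℝ, K₁ * K₂ * x * y⁻¹ * z = K₁ * x * (K₂ * z) / y by intros; ring,
    le_div_iff₀ (by positivity)]
  calc exp (4 * t) * exp (-(log 2 * (n * N))) * (1 + l) ^ α
      = exp (4 * t) * (1 + l) ^ α * exp (-(log 2 * (n * N))) := by ring
    _ ≤ K₁ * (1 + t) ^ α * exp (4 * l) * exp (-(log 2 * (n * N))) := by
        gcongr ?_ * _; exact hweight t l ht htl
    _ = K₁ * exp (4 * l) * ((1 + t) ^ α * exp (-(log 2 * (n * N)))) := by ring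
    _ ≤ K₁ * exp (4 * l) * (K₂ * exp (-(log 2 / 2)) ^ N) := by
        gcongr _ * ?_; exact hdecay N

/-- with `F_N(λ) = 2^{2nN²−nN}` for `λ < 2^{−nN²/2}` (and `0` otherwise),
for every `α > 0` one has `∑_{N even} F_N(λ) ≤ C(α,n) λ^{−4} log^{−α}(e/λ)` on `(0,1)`. -/
theorem stmt_15 (n : ℕ) (hn : 1 ≤ n) (α : ℝ) (hα : 0 < α) :
    ∃ C : ℝ, ∀ lam ∈ Set.Ioo (0 : ℝ) 1,
      (∑' N : ℕ, (if Even N ∧ lam < (2 : ℝ) ^ (-((n : ℝ) * (N : ℝ) ^ 2) / 2)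
          then (2 : ℝ) ^ (2 * (n : ℝ) * (N : ℝ) ^ 2 - (n : ℝ) * (N : ℝ)) else 0)) ≤
        C * lam ^ (-4 : ℝ) * (Real.log (Real.exp 1 / lam)) ^ (-α) := by
  obtain ⟨C, hC, hterm⟩ := two_rpow_le_mul_geometric_of_lt hα hn
  set r := exp (-(log 2 / 2))
  have hr1 : r < 1 := exp_lt_one_iff.mpr (by linarith [log_pos (one_lt_two (α := ℝ))])
  refine ⟨C * (1 - r)⁻¹, fun lam hlam => ?_⟩
  have hlog : 0 < log (exp 1 / lam) := log_pos <| by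
    rw [one_lt_div hlam.1]; exact hlam.2.trans (one_lt_exp_iff.mpr one_pos)
  calc _ ≤ C * lam ^ (-4 : ℝ) * log (exp 1 / lam) ^ (-α) * (1 - r)⁻¹ := by
        refine tsum_le_mul_geometric (exp_pos _).le hr1 (fun N => ?_) (fun N => ?_)
        · split_ifs <;> positivity
        · split_ifs with hN
          · exact hterm lam hlam N hN.2
          · have := hlam.1; positivity
    _ = C * (1 - r)⁻¹ * lam ^ (-4 : ℝ) * log (exp 1 / lam) ^ (-α) := by ring
end
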